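/- arXiv:0810.0184 — 2 statements merged into one kernel-verified Lean document; each statement's English description precedes it below -/
import Mathlib

section
/- Dunkl-type realization of A_λ on ℂ[z]: for every λ ∈ ℂ, the ℂ-linear endomorphisms ρ₊ = (1/2)D − λΔ, ρ₋ = −(1/2)M_z, and P of Polynomial ℂ satisfy ρ₊ ∘ ρ₋ − ρ₋ ∘ ρ₊ = −(1/4)·id + λ·P, ρ₊ ∘ P = −P ∘ ρ₊, ρ₋ ∘ P = −P ∘ ρ₋, and P ∘ P = id (so they define a representation of A_λ on ℂ[z]). -/
noncomputable section

open Polynomial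

/-- The multiplication-by-`z` operator `M_z` on `ℂ[z]`. -/
def Mz : Module.End ℂ (Polynomial ℂ) := LinearMap.mulLeft ℂ (X : Polynomial ℂ)

/-- The derivative operator `D` on `ℂ[z]`. -/
def Dop : Module.End ℂ (Polynomial ℂ) :=
  (Polynomial.derivative : Polynomial ℂ →ₗ[ℂ] Polynomial ℂ)

/-- The parity operator `P` on `ℂ[z]`: the algebra map `z ↦ −z`,
i.e. `h(z) ↦ h(−z)`, viewed as a ℂ-linear endomorphism. -/
def Pop : Module.End ℂ (Polynomial ℂ) :=
  (Polynomial.aeval (-(X : Polynomial ℂ)) :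
    Polynomial ℂ →ₐ[ℂ] Polynomial ℂ).toLinearMap

/-- The operator `Δ : h ↦ (h(z) − h(−z))/z` on `ℂ[z]`. -/
def DeltaOp : Module.End ℂ (Polynomial ℂ) where
  toFun h := (h - h.comp (-(X : Polynomial ℂ))).divX
  map_add' h g := by
    show ((h + g) - (h + g).comp (-(X : Polynomial ℂ))).divX = _
    rw [Polynomial.add_comp, add_sub_add_comm, Polynomial.divX_add]
  map_smul' c h := by
    show ((c • h) - (c • h).comp (-(X : Polynomial ℂ))).divX = _
    rw [Polynomial.smul_comp, ← smul_sub, Polynomial.smul_eq_C_mul,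
      Polynomial.divX_C_mul, ← Polynomial.smul_eq_C_mul]
    rfl

/-- The operator `ρ₊ = (1/2)D − λΔ`. -/
def rhoP (lam : ℂ) : Module.End ℂ (Polynomial ℂ) :=
  (1 / 2 : ℂ) • Dop - lam • DeltaOp

/-- The operator `ρ₋ = −(1/2)M_z`. -/
def rhoM : Module.End ℂ (Polynomial ℂ) := -((1 / 2 : ℂ) • Mz)

end

/-!
All four relations reduce to identities for `D`, `M_z`, `P`, `Δ` evaluated on a single
polynomial: Leibniz' rule `D(zh) = h + z·Dh`, the chain rule `D(Ph) = -P(Dh)`, the reflection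
`P(zh) = -z·Ph`, and `z·Δh = h - Ph`. As `z` is not a zero divisor, the last one characterises
`Δ`; it yields `Δ(zh) = h + Ph`, i.e. `[Δ, M_z] = 2P`, and `ΔP = -PΔ`. With `[D, M_z] = id` the
commutator `[ρ₊, ρ₋] = -¼[D, M_z] + (λ/2)[Δ, M_z]` follows.
-/

namespace Polynomial

variable {R : Type*} [CommRing R]

theorem derivative_comp_neg_X (p : R[X]) :
    derivative (p.comp (-X)) = -(derivative p).comp (-X) := by
  rw [derivative_comp, derivative_neg, derivative_X, neg_one_mul]

theorem X_mul_divX_sub_comp_neg_X (p : R[X]) :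
    X * (p - p.comp (-X)).divX = p - p.comp (-X) := by
  have hcoeff : (p - p.comp (-X)).coeff 0 = 0 := by
    rw [coeff_sub, coeff_zero_eq_eval_zero, coeff_zero_eq_eval_zero, eval_comp, eval_neg,
      eval_X, neg_zero, sub_self]
  simpa [hcoeff] using X_mul_divX_add (p - p.comp (-X))

end Polynomial

open Polynomial

theorem Pop_apply (h : ℂ[X]) : Pop h = h.comp (-X) := rfl

theorem Mz_apply (h : ℂ[X]) : Mz h = X * h := rfl

theorem Dop_apply (h : ℂ[X]) : Dop h = derivative h := rfl

theorem X_mul_DeltaOp (h : ℂ[X]) : X * DeltaOp h = h - Pop h :=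
  X_mul_divX_sub_comp_neg_X h

theorem DeltaOp_eq_of_X_mul {h g : ℂ[X]} (hg : X * g = h - Pop h) : DeltaOp h = g :=
  mul_left_cancel₀ X_ne_zero ((X_mul_DeltaOp h).trans hg.symm)

theorem Pop_Pop (h : ℂ[X]) : Pop (Pop h) = h := comp_neg_X_comp_neg_X h

theorem Pop_X_mul (h : ℂ[X]) : Pop (X * h) = -(X * Pop h) := by
  rw [Pop_apply, Pop_apply, mul_comp, X_comp, neg_mul]

theorem Dop_X_mul (h : ℂ[X]) : Dop (X * h) = h + X * Dop h := by
  rw [Dop_apply, Dop_apply, derivative_mul, derivative_X, one_mul]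

theorem DeltaOp_X_mul (h : ℂ[X]) : DeltaOp (X * h) = h + Pop h :=
  DeltaOp_eq_of_X_mul (by rw [Pop_X_mul]; ring)

theorem Dop_Pop (h : ℂ[X]) : Dop (Pop h) = -Pop (Dop h) :=
  derivative_comp_neg_X h

theorem DeltaOp_Pop (h : ℂ[X]) : DeltaOp (Pop h) = -Pop (DeltaOp h) :=
  DeltaOp_eq_of_X_mul (by rw [mul_neg, ← Pop_X_mul, X_mul_DeltaOp, map_sub, Pop_Pop])

theorem Dop_comp_Mz_sub_Mz_comp_Dop : Dop ∘ₗ Mz - Mz ∘ₗ Dop = LinearMap.id :=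
  LinearMap.ext fun h => by simp [Mz_apply, Dop_X_mul]

theorem DeltaOp_comp_Mz_sub_Mz_comp_DeltaOp :
    DeltaOp ∘ₗ Mz - Mz ∘ₗ DeltaOp = (2 : ℂ) • Pop := by
  refine LinearMap.ext fun h => ?_
  simp only [LinearMap.sub_apply, LinearMap.comp_apply, Mz_apply, DeltaOp_X_mul, X_mul_DeltaOp,
    LinearMap.smul_apply]
  module

theorem Pop_comp_Pop : Pop ∘ₗ Pop = LinearMap.id := LinearMap.ext Pop_Pop

theorem Mz_comp_Pop : Mz ∘ₗ Pop = -(Pop ∘ₗ Mz) :=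
  LinearMap.ext fun h => by simp [Mz_apply, Pop_X_mul]

theorem Dop_comp_Pop : Dop ∘ₗ Pop = -(Pop ∘ₗ Dop) := LinearMap.ext Dop_Pop

theorem DeltaOp_comp_Pop : DeltaOp ∘ₗ Pop = -(Pop ∘ₗ DeltaOp) := LinearMap.ext DeltaOp_Pop

/-- Dunkl-type realization of `A_λ` on `ℂ[z]`: the operators `ρ₊`, `ρ₋`, `P`
satisfy `ρ₊ρ₋ − ρ₋ρ₊ = −(1/4)·id + λ·P`, `ρ₊P = −Pρ₊`, `ρ₋P = −Pρ₋`, `P² = id`. -/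
theorem dunkl_representation (lam : ℂ) :
    rhoP lam ∘ₗ rhoM - rhoM ∘ₗ rhoP lam =
        (-(1 / 4 : ℂ)) • (LinearMap.id : Module.End ℂ (Polynomial ℂ)) + lam • Pop ∧
      rhoP lam ∘ₗ Pop = -(Pop ∘ₗ rhoP lam) ∧
      rhoM ∘ₗ Pop = -(Pop ∘ₗ rhoM) ∧
      Pop ∘ₗ Pop = (LinearMap.id : Module.End ℂ (Polynomial ℂ)) := by
  refine ⟨?_, ?_, ?_, Pop_comp_Pop⟩
  · have hcomm : rhoP lam ∘ₗ rhoM - rhoM ∘ₗ rhoP lam =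
        (-(1 / 4 : ℂ)) • (Dop ∘ₗ Mz - Mz ∘ₗ Dop) +
          (lam / 2) • (DeltaOp ∘ₗ Mz - Mz ∘ₗ DeltaOp) := by
      simp only [rhoP, rhoM, LinearMap.comp_neg, LinearMap.neg_comp, LinearMap.sub_comp,
        LinearMap.comp_sub, LinearMap.smul_comp, LinearMap.comp_smul]
      module
    rw [hcomm, Dop_comp_Mz_sub_Mz_comp_Dop, DeltaOp_comp_Mz_sub_Mz_comp_DeltaOp]
    module
  · simp only [rhoP, LinearMap.sub_comp, LinearMap.comp_sub, LinearMap.smul_comp,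
      LinearMap.comp_smul, Dop_comp_Pop, DeltaOp_comp_Pop]
    module
  · simp only [rhoM, LinearMap.neg_comp, LinearMap.comp_neg, LinearMap.smul_comp,
      LinearMap.comp_smul, Mz_comp_Pop]
    module
end

section
/- Irreducibility of the Dunkl-type representation: if λ ∈ ℂ satisfies λ ≠ (2m+1)/4 for every m ∈ ℕ (equivalently λ ≠ h + 1/4 for every h with 2h ∈ ℕ), then the only ℂ-subspaces of Polynomial ℂ that are invariant under all three operators ρ₊, ρ₋, and P are the zero subspace and the whole space. -/
/-!
The coefficients of `ρ₊` shift down by one with weights `(k+1)/2 - λ(1 - (-1)^(k+1))`, which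
vanish only for `λ = (2m+1)/4`. So `ρ₊` lowers the degree of every nonconstant polynomial by
exactly one, and iterating it on a nonzero element of an invariant subspace `W` yields a nonzero
constant, i.e. `1 ∈ W`. Since `ρ₋` is multiplication by `-z/2`, `W` then contains every `z^n`.
-/

open Polynomial

lemma Polynomial.coeff_comp_neg_X {R : Type*} [CommRing R] (p : R[X]) (n : ℕ) :
    (p.comp (-X)).coeff n = (-1) ^ n * p.coeff n := by
  rw [← neg_one_mul, ← C_1, ← C_neg, comp_C_mul_X_coeff, mul_comm]

lemma Submodule.eq_top_of_one_mem_of_X_mul_mem {R : Type*} [CommSemiring R]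
    {W : Submodule R R[X]} (h1 : 1 ∈ W) (hX : ∀ p ∈ W, X * p ∈ W) : W = ⊤ := by
  have hXpow (n : ℕ) : (X : R[X]) ^ n ∈ W := by
    induction n with
    | zero => simpa using h1
    | succ n ih => simpa [pow_succ'] using hX _ ih
  refine Submodule.eq_top_iff'.mpr fun p => ?_
  induction p using Polynomial.induction_on' with
  | add p q hp hq => exact W.add_mem hp hq
  | monomial n a =>
    simpa [← C_mul_X_pow_eq_monomial, ← smul_eq_C_mul] using W.smul_mem a (hXpow n)

lemma Submodule.one_mem_of_degree_lowering {K : Type*} [Field K] {W : Submodule K K[X]}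
    {f : K[X] → K[X]} (hfW : ∀ p ∈ W, f p ∈ W)
    (hf : ∀ p : K[X], 0 < p.natDegree → f p ≠ 0 ∧ (f p).natDegree < p.natDegree)
    {p : K[X]} (hpW : p ∈ W) (hp0 : p ≠ 0) : (1 : K[X]) ∈ W := by
  induction hn : p.natDegree using Nat.strong_induction_on generalizing p with
  | _ n ih =>
    rcases Nat.eq_zero_or_pos n with rfl | hpos
    · rw [eq_C_of_natDegree_eq_zero hn] at hpW hp0
      simpa [smul_C, inv_mul_cancel₀ (C_ne_zero.mp hp0)] using W.smul_mem (p.coeff 0)⁻¹ hpW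
    · obtain ⟨hfp0, hfp⟩ := hf p (hn ▸ hpos)
      exact ih _ (hn ▸ hfp) (hfW p hpW) hfp0 rfl

lemma ne_zero_and_natDegree_lt_of_coeff_eq_mul_coeff_succ {R : Type*} [Semiring R]
    [NoZeroDivisors R] {p q : R[X]} (c : ℕ → R) (hc : ∀ k, c k ≠ 0)
    (hq : ∀ k, q.coeff k = c k * p.coeff (k + 1)) (hp : 0 < p.natDegree) :
    q ≠ 0 ∧ q.natDegree < p.natDegree := by
  obtain ⟨n, hn⟩ : ∃ n, p.natDegree = n + 1 := ⟨_, (Nat.succ_pred_eq_of_pos hp).symm⟩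
  have hp0 : p ≠ 0 := ne_zero_of_natDegree_gt hp
  refine ⟨fun hq0 => ?_, ?_⟩
  · have := hq n
    rw [hq0, coeff_zero, ← hn] at this
    exact mul_ne_zero (hc n) (leadingCoeff_ne_zero.mpr hp0) this.symm
  · refine hn ▸ Nat.lt_succ_of_le (natDegree_le_iff_coeff_eq_zero.mpr fun k hk => ?_)
    rw [hq, coeff_eq_zero_of_natDegree_lt (by omega), mul_zero]

lemma coeff_DeltaOp (h : ℂ[X]) (k : ℕ) :
    (DeltaOp h).coeff k = (1 - (-1) ^ (k + 1)) * h.coeff (k + 1) := by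
  change (h - h.comp (-X)).divX.coeff k = _
  rw [coeff_divX, coeff_sub, coeff_comp_neg_X]
  ring

lemma coeff_rhoP (lam : ℂ) (h : ℂ[X]) (k : ℕ) :
    (rhoP lam h).coeff k =
      ((k + 1 : ℂ) / 2 - lam * (1 - (-1) ^ (k + 1))) * h.coeff (k + 1) := by
  simp only [rhoP, LinearMap.sub_apply, LinearMap.smul_apply, coeff_sub, coeff_smul, smul_eq_mul,
    coeff_DeltaOp, Dop, coeff_derivative]
  ring

/-- For `k + 1 = 2m + 1` the weight is `(2m+1)/2 - 2λ`; for even `k + 1` it is `(k+1)/2`. -/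
lemma rhoP_weight_ne_zero {lam : ℂ} (hlam : ∀ m : ℕ, lam ≠ ((2 * m + 1 : ℕ) : ℂ) / 4)
    (k : ℕ) :
    (k + 1 : ℂ) / 2 - lam * (1 - (-1) ^ (k + 1)) ≠ 0 := by
  rcases Nat.even_or_odd k with ⟨m, rfl⟩ | ⟨m, rfl⟩
  · rw [Odd.neg_one_pow ⟨m, by ring⟩]
    intro h
    apply hlam m
    push_cast at h ⊢
    linear_combination -h / 2
  · rw [Even.neg_one_pow ⟨m + 1, by ring⟩, sub_self, mul_zero, sub_zero]
    exact div_ne_zero (Nat.cast_add_one_ne_zero _) two_ne_zero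

lemma rhoP_ne_zero_and_natDegree_lt {lam : ℂ}
    (hlam : ∀ m : ℕ, lam ≠ ((2 * m + 1 : ℕ) : ℂ) / 4) (p : ℂ[X])
    (hp : 0 < p.natDegree) :
    rhoP lam p ≠ 0 ∧ (rhoP lam p).natDegree < p.natDegree :=
  ne_zero_and_natDegree_lt_of_coeff_eq_mul_coeff_succ _ (rhoP_weight_ne_zero hlam)
    (coeff_rhoP lam p) hp

lemma X_mul_eq_neg_two_smul_rhoM (p : ℂ[X]) : X * p = (-2 : ℂ) • rhoM p := by
  simp only [rhoM, Mz, LinearMap.neg_apply, LinearMap.smul_apply, LinearMap.mulLeft_apply,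
    smul_neg, smul_smul]
  norm_num

/-- Irreducibility of the Dunkl-type representation: if `λ ≠ (2m+1)/4` for every
`m ∈ ℕ` (i.e. `λ ≠ h + 1/4` for every `h` with `2h ∈ ℕ`), then the only
ℂ-subspaces of `ℂ[z]` invariant under `ρ₊`, `ρ₋`, and `P` are `⊥` and `⊤`. -/
theorem dunkl_irreducible (lam : ℂ)
    (hlam : ∀ m : ℕ, lam ≠ ((2 * m + 1 : ℕ) : ℂ) / 4) :
    ∀ W : Submodule ℂ (Polynomial ℂ),
      (∀ h ∈ W, rhoP lam h ∈ W) → (∀ h ∈ W, rhoM h ∈ W) → (∀ h ∈ W, Pop h ∈ W) →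
      W = ⊥ ∨ W = ⊤ := by
  intro W hWp hWm _
  refine or_iff_not_imp_left.mpr fun hW => ?_
  obtain ⟨p, hpW, hp0⟩ := Submodule.exists_mem_ne_zero_of_ne_bot hW
  refine Submodule.eq_top_of_one_mem_of_X_mul_mem ?_ fun q hq => ?_
  · exact Submodule.one_mem_of_degree_lowering hWp (rhoP_ne_zero_and_natDegree_lt hlam) hpW
      hp0
  · simpa [X_mul_eq_neg_two_smul_rhoM] using W.smul_mem (-2 : ℂ) (hWm q hq)
end
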